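/- The element p^k is weakly k-distinguished in any p-complete δ-ring R: the ideal (p^k, δ(p^k), …, δ^k(p^k)) is the unit ideal. -/

import Mathlib

/-!
On the image of `ℤ` a δ-structure is forced: `δ(n) = (n - n ^ p) / p`, because both sides drop by
the same sum under `n ↦ n + 1` and vanish at `0`. In `ℤ` one has
`δ(p ^ (m + 1) * u) = p ^ m * (u - p ^ ((m + 1) * (p - 1)) * u ^ p)`, so each application of `δ`
lowers the power of `p` by one and keeps the cofactor `≡ 1 mod p`. Hence `δ^[k](p ^ k) ≡ 1 mod p`,
which is a unit in a `p`-adically complete ring since `p` lies in the Jacobson radical.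
-/

/-- A δ-ring structure at the prime `p` on a commutative ring `R`. -/
structure DeltaRing (p : ℕ) (R : Type*) [CommRing R] where
  δ : R → R
  delta_one : δ 1 = 0
  delta_mul : ∀ a b, δ (a * b) = a ^ p * δ b + b ^ p * δ a + (p : R) * δ a * δ b
  delta_add : ∀ a b, δ (a + b) = δ a + δ b -
    ∑ i ∈ Finset.Ioo 0 p, ((p.choose i / p : ℕ) : R) * a ^ i * b ^ (p - i)

open Finset

def intDelta (p : ℕ) (z : ℤ) : ℤ := (z - z ^ p) / p

section
variable {p : ℕ} [hp : Fact p.Prime]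

lemma prime_dvd_sub_pow_prime (z : ℤ) : (p : ℤ) ∣ z - z ^ p := by
  rw [← ZMod.intCast_zmod_eq_zero_iff_dvd]
  push_cast
  rw [ZMod.pow_card, sub_self]

lemma natCast_mul_intDelta (z : ℤ) : p * intDelta p z = z - z ^ p :=
  Int.mul_ediv_cancel' (prime_dvd_sub_pow_prime z)

lemma add_one_pow_prime (z : ℤ) :
    (z + 1) ^ p = z ^ p + p * ∑ i ∈ Ioo 0 p, ((p.choose i / p : ℕ) : ℤ) * z ^ i + 1 := by
  have hchoose : ∀ i ∈ Ioo 0 p, (p : ℤ) * ((p.choose i / p : ℕ) : ℤ) = p.choose i := by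
    intro i hi
    rw [mem_Ioo] at hi
    exact_mod_cast Nat.mul_div_cancel' (hp.out.dvd_choose_self hi.1.ne' hi.2)
  have hmiddle : ∑ i ∈ Ioo 0 p, z ^ i * (p.choose i : ℤ) =
      p * ∑ i ∈ Ioo 0 p, ((p.choose i / p : ℕ) : ℤ) * z ^ i := by
    rw [mul_sum]
    exact sum_congr rfl fun i hi => by rw [← hchoose i hi]; ring
  rw [add_pow, sum_range_succ, ← Nat.Ico_zero_eq_range, ← Ioo_insert_left hp.out.pos,
    sum_insert (by simp)]
  simp only [one_pow, mul_one, hmiddle, pow_zero, Nat.choose_zero_right, Nat.choose_self,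
    Nat.cast_one]
  ring

lemma intDelta_add_one (z : ℤ) :
    intDelta p (z + 1) = intDelta p z - ∑ i ∈ Ioo 0 p, ((p.choose i / p : ℕ) : ℤ) * z ^ i := by
  apply mul_left_cancel₀ (Nat.cast_ne_zero.mpr hp.out.ne_zero : (p : ℤ) ≠ 0)
  rw [mul_sub, natCast_mul_intDelta, natCast_mul_intDelta, add_one_pow_prime]
  ring

lemma intDelta_prime_pow_succ_mul (m : ℕ) (u : ℤ) :
    intDelta p (p ^ (m + 1) * u) = p ^ m * (u - p ^ ((m + 1) * (p - 1)) * u ^ p) := by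
  apply mul_left_cancel₀ (Nat.cast_ne_zero.mpr hp.out.ne_zero : (p : ℤ) ≠ 0)
  have hexp : (m + 1) * p = m + 1 + (m + 1) * (p - 1) := by
    have := Nat.le_mul_of_pos_right (m + 1) hp.out.pos
    rw [Nat.mul_sub_one]; omega
  rw [natCast_mul_intDelta, mul_pow, ← pow_mul, hexp]
  ring

lemma iterate_intDelta_prime_pow_add_mul (m j : ℕ) (u : ℤ) :
    ∃ v, (intDelta p)^[j] (p ^ (m + j) * u) = p ^ m * v ∧ v ≡ u [ZMOD p] := by
  induction j generalizing m with
  | zero => exact ⟨u, rfl, rfl⟩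
  | succ j ih =>
    obtain ⟨v, hv, hvu⟩ := ih (m + 1)
    refine ⟨v - p ^ ((m + 1) * (p - 1)) * v ^ p, ?_, ?_⟩
    · rw [Function.iterate_succ_apply', ← add_assoc, add_right_comm, hv,
        intDelta_prime_pow_succ_mul]
    · have hpos : (m + 1) * (p - 1) ≠ 0 := by
        have := hp.out.two_le
        exact Nat.mul_ne_zero (by omega) (by omega)
      have hzero : (p : ℤ) ^ ((m + 1) * (p - 1)) * v ^ p ≡ 0 [ZMOD p] :=
        Int.modEq_zero_iff_dvd.mpr ((dvd_pow_self _ hpos).mul_right _)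
      simpa using hvu.sub hzero
end

namespace DeltaRing

variable {p : ℕ} {R : Type*} [CommRing R] (dr : DeltaRing p R)

lemma delta_zero : dr.δ 0 = 0 := by
  have h := dr.delta_add 0 0
  rw [sum_eq_zero fun i hi => by rw [zero_pow (mem_Ioo.mp hi).1.ne', mul_zero, zero_mul],
    add_zero, sub_zero] at h
  linear_combination -h

lemma delta_add_one (a : R) :
    dr.δ (a + 1) = dr.δ a - ∑ i ∈ Ioo 0 p, ((p.choose i / p : ℕ) : R) * a ^ i := by
  simp only [dr.delta_add, dr.delta_one, one_pow, mul_one, add_zero]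

lemma delta_intCast [Fact p.Prime] (z : ℤ) : dr.δ z = intDelta p z := by
  have hperiodic : Function.Periodic (fun n : ℤ => dr.δ n - intDelta p n) 1 := fun n => by
    simp only [Int.cast_add, Int.cast_one, delta_add_one, intDelta_add_one, Int.cast_sub,
      Int.cast_sum, Int.cast_mul, Int.cast_pow, Int.cast_natCast]
    ring
  have h := hperiodic.int_mul_eq z
  have hzero : intDelta p 0 = 0 := by simp [intDelta, zero_pow (NeZero.ne p)]
  rwa [mul_one, Int.cast_zero, delta_zero, hzero, Int.cast_zero, sub_zero, sub_eq_zero] at h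

lemma iterate_delta_intCast [Fact p.Prime] (j : ℕ) (z : ℤ) :
    dr.δ^[j] z = (intDelta p)^[j] z := by
  induction j generalizing z with
  | zero => rfl
  | succ j ih => rw [Function.iterate_succ_apply, Function.iterate_succ_apply, delta_intCast, ih]

end DeltaRing

lemma isUnit_intCast_of_modEq_one {p : ℕ} {R : Type*} [CommRing R]
    (hc : IsAdicComplete (Ideal.span {(p : R)}) R) {v : ℤ} (hv : v ≡ 1 [ZMOD p]) :
    IsUnit (v : R) := by
  obtain ⟨t, ht⟩ := Int.modEq_iff_dvd.mp hv.symm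
  refine Ideal.isUnit_of_sub_one_mem_jacobson_bot _
    (IsAdicComplete.le_jacobson_bot (Ideal.span {(p : R)}) ?_)
  rw [← Int.cast_one, ← Int.cast_sub, ht, Int.cast_mul, Int.cast_natCast]
  exact Ideal.mul_mem_right _ _ (Ideal.mem_span_singleton_self _)

/-- In any `p`-complete δ-ring, the element `p^k` is weakly `k`-distinguished:
the ideal `(p^k, δ(p^k), …, δ^k(p^k))` is the unit ideal. -/
theorem stmt7 {p : ℕ} [Fact p.Prime] {R : Type*} [CommRing R] (dr : DeltaRing p R)
    (hc : IsAdicComplete (Ideal.span {(p : R)}) R) (k : ℕ) :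
    Ideal.span ((fun j => dr.δ^[j] ((p : R) ^ k)) '' Set.Iic k) = ⊤ := by
  obtain ⟨v, hv, hv1⟩ := iterate_intDelta_prime_pow_add_mul (p := p) 0 k 1
  rw [zero_add, mul_one, pow_zero, one_mul] at hv
  have hδk : dr.δ^[k] ((p : R) ^ k) = v := by
    simpa [hv] using dr.iterate_delta_intCast k ((p : ℤ) ^ k)
  exact Ideal.eq_top_of_isUnit_mem _ (Ideal.subset_span ⟨k, Set.mem_Iic.mpr le_rfl, hδk⟩)
    (isUnit_intCast_of_modEq_one hc hv1)
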